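/- arXiv:2512.10781 — 3 statements merged into one kernel-verified Lean document; each statement's English description precedes it below -/
import Mathlib

section
/- Let ℓ > 3 and p > 3 be primes and let v be a unit of ℤ/ℓℤ. Then there exists a unit u of ℤ/ℓℤ such that v·u^p is a cube in the unit group of ℤ/ℓℤ and −(v·u^p)/3 is a square in the unit group of ℤ/ℓℤ. -/
/-!
Since `p` is prime to `6`, raising to the `p`-th power is a bijection on `G / G⁶` for any
commutative group `G`; so `u` can be chosen with `v * u ^ p = (-3)³ * x⁶`. That element is the cube
of `-3 * x²`, and dividing its negative by `3` gives `9 * x⁶ = (3 * x³)²`.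
-/

theorem exists_mul_pow_eq_mul_pow_of_coprime {G : Type*} [CommGroup G] {p n : ℕ}
    (h : p.Coprime n) (v t : G) : ∃ u x : G, v * u ^ p = t * x ^ n := by
  obtain ⟨a, b, hab⟩ := Nat.isCoprime_iff_coprime.mpr h
  set g := t * v⁻¹
  refine ⟨g ^ a, g ^ (-b), ?_⟩
  have hsplit : g ^ (a * p) = g * (g ^ (-b)) ^ n := by
    rw [← zpow_natCast, ← zpow_mul, ← zpow_one_add]
    congr 1
    linarith
  rw [← zpow_natCast, ← zpow_mul, hsplit, ← mul_assoc, mul_inv_cancel_comm_assoc]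

theorem Nat.Prime.coprime_six {p : ℕ} (hp : p.Prime) (hp3 : 3 < p) : p.Coprime 6 :=
  Nat.Coprime.mul_right (m := 2) (n := 3)
    ((Nat.coprime_primes hp Nat.prime_two).mpr (by omega))
    ((Nat.coprime_primes hp Nat.prime_three).mpr (by omega))

/-- Let `ℓ > 3` and `p > 3` be primes and `v` a unit of `ℤ/ℓℤ`. Then there is a unit `u` such
that `v * u ^ p` is a cube in `(ℤ/ℓℤ)ˣ` and `-(v * u ^ p) / 3` is a square in `(ℤ/ℓℤ)ˣ`. -/
theorem exists_unit_cube_and_square (ℓ p : ℕ) [Fact ℓ.Prime] (hp : p.Prime)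
    (hℓ3 : ℓ > 3) (hp3 : p > 3) (v : (ZMod ℓ)ˣ) :
    ∃ u : (ZMod ℓ)ˣ, (∃ w : (ZMod ℓ)ˣ, v * u ^ p = w ^ 3) ∧
      (∃ s : (ZMod ℓ)ˣ, -(((v * u ^ p : (ZMod ℓ)ˣ) : ZMod ℓ) / (3 : ZMod ℓ)) = (s : ZMod ℓ) ^ 2) := by
  have h3 : (3 : ZMod ℓ) ≠ 0 := by
    intro h
    have := Nat.le_of_dvd (by norm_num) ((ZMod.natCast_eq_zero_iff 3 ℓ).mp (by exact_mod_cast h))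
    omega
  set c := Units.mk0 (3 : ZMod ℓ) h3
  obtain ⟨u, x, hux⟩ := exists_mul_pow_eq_mul_pow_of_coprime (hp.coprime_six hp3) v ((-c) ^ 3)
  refine ⟨u, ⟨-c * x ^ 2, ?_⟩, ⟨c * x ^ 3, ?_⟩⟩
  · rw [hux, mul_pow, ← pow_mul]
  · rw [hux]
    push_cast [c, Units.val_mk0]
    field_simp
end

section
/- Let ℓ > 3 and p > 3 be primes, and let A, B ∈ ℤ/ℓℤ satisfy 4A^3 + 27B^2 ≠ 0. Then there exist elements a, b ∈ ℤ/ℓℤ and units u, c of ℤ/ℓℤ such that 2a = −B·u^6, 3b = A·u^4, and a^2 + b^3 = c^p. -/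
/-!
Put `a = -B u⁶ / 2` and `b = A u⁴ / 3`; then `a² + b³ = D u¹²` with the nonzero constant
`D = (4A³ + 27B²) / 108`. Since `p` is prime to `12`, Bézout (`12 s + p t = 1`) makes `D u¹²` a
`p`-th power for `u = D⁻ˢ`: indeed `D · D⁻¹²ˢ = (Dᵗ)ᵖ`.
-/

theorem ZMod.natCast_ne_zero_of_pos_of_lt {ℓ n : ℕ} (hn : 0 < n) (hnℓ : n < ℓ) :
    (n : ZMod ℓ) ≠ 0 := by
  rw [Ne, ZMod.natCast_eq_zero_iff]
  exact fun hdvd => (Nat.le_of_dvd hn hdvd).not_gt hnℓ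

theorem Nat.Prime.coprime_twelve_of_three_lt {p : ℕ} (hp : p.Prime) (hp3 : 3 < p) :
    Nat.Coprime 12 p := by
  refine ((hp.coprime_iff_not_dvd).2 fun hdvd => ?_).symm
  rcases hp.dvd_mul.1 (show p ∣ 2 ^ 2 * 3 from hdvd) with hdvd4 | hdvd3
  · exact (Nat.le_of_dvd two_pos (hp.dvd_of_dvd_pow hdvd4)).not_gt (by omega)
  · exact (Nat.le_of_dvd three_pos hdvd3).not_gt hp3

theorem exists_mul_pow_eq_pow_of_coprime {G : Type*} [CommGroup G] {m n : ℕ}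
    (hmn : Nat.Coprime m n) (g : G) : ∃ u v : G, g * u ^ m = v ^ n := by
  have hbezout : (1 : ℤ) = m * m.gcdA n + n * m.gcdB n := by
    rw [← Nat.gcd_eq_gcd_ab, hmn.gcd_eq_one, Nat.cast_one]
  refine ⟨g ^ (-m.gcdA n), g ^ m.gcdB n, ?_⟩
  rw [← zpow_natCast, ← zpow_natCast, ← zpow_mul, ← zpow_mul, ← zpow_one_add]
  congr 1
  linear_combination hbezout

theorem ofNat_108_ne_zero {R : Type*} [Semiring R] [NoZeroDivisors R] (h2 : (2 : R) ≠ 0)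
    (h3 : (3 : R) ≠ 0) : (108 : R) ≠ 0 := by
  have : (108 : R) = 2 ^ 2 * 3 ^ 3 := by norm_num
  rw [this]
  exact mul_ne_zero (pow_ne_zero _ h2) (pow_ne_zero _ h3)

theorem frey_coeffs_sq_add_cube {K : Type*} [Field K] (h2 : (2 : K) ≠ 0) (h3 : (3 : K) ≠ 0)
    (A B u : K) :
    (-B * u ^ 6 / 2) ^ 2 + (A * u ^ 4 / 3) ^ 3 = (4 * A ^ 3 + 27 * B ^ 2) / 108 * u ^ 12 := by
  rw [div_mul_eq_mul_div, eq_div_iff (ofNat_108_ne_zero h2 h3)]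
  field_simp
  ring

/-- Let `ℓ > 3` and `p > 3` be primes and `A B : ℤ/ℓℤ` with `4A³ + 27B² ≠ 0`. Then there exist
`a b : ℤ/ℓℤ` and units `u, c` of `ℤ/ℓℤ` with `2a = -B u⁶`, `3b = A u⁴` and `a² + b³ = cᵖ`. -/
theorem exists_frey_coeffs_good_reduction (ℓ p : ℕ) (hℓ : ℓ.Prime) (hp : p.Prime)
    (hℓ3 : ℓ > 3) (hp3 : p > 3) (A B : ZMod ℓ) (hAB : 4 * A ^ 3 + 27 * B ^ 2 ≠ 0) :
    ∃ (a b : ZMod ℓ) (u c : (ZMod ℓ)ˣ),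
      2 * a = -B * (u : ZMod ℓ) ^ 6 ∧ 3 * b = A * (u : ZMod ℓ) ^ 4 ∧
      a ^ 2 + b ^ 3 = (c : ZMod ℓ) ^ p := by
  have : Fact ℓ.Prime := ⟨hℓ⟩
  have h2 : (2 : ZMod ℓ) ≠ 0 :=
    mod_cast ZMod.natCast_ne_zero_of_pos_of_lt (n := 2) two_pos (by omega)
  have h3 : (3 : ZMod ℓ) ≠ 0 :=
    mod_cast ZMod.natCast_ne_zero_of_pos_of_lt (n := 3) three_pos hℓ3
  obtain ⟨D, hD⟩ := (div_ne_zero hAB (ofNat_108_ne_zero h2 h3)).isUnit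
  obtain ⟨u, c, hDuc⟩ :=
    exists_mul_pow_eq_pow_of_coprime (hp.coprime_twelve_of_three_lt hp3) D
  refine ⟨-B * (u : ZMod ℓ) ^ 6 / 2, A * (u : ZMod ℓ) ^ 4 / 3, u, c,
    mul_div_cancel₀ _ h2, mul_div_cancel₀ _ h3, ?_⟩
  rw [frey_coeffs_sq_add_cube h2 h3, ← hD, ← Units.val_pow_eq_pow_val, ← Units.val_mul, hDuc,
    Units.val_pow_eq_pow_val]
end

section
/- Let ℓ > 3 and p > 3 be distinct primes, let k be a positive integer, and let j₀ ∈ ℚ_ℓ be an element whose ℓ-adic valuation equals −k·p. Then there exist units a, b of ℤ_ℓ and an element c ∈ ℤ_ℓ of ℓ-adic valuation k such that a^2 + b^3 = c^p and 12^3·b^3 = j₀·c^p (the latter an equality in ℚ_ℓ). -/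
/-! Write `j₀ = u ℓ^{-kp}` with `u` a unit and split `ℓ^{kp} = A + B` into units with `12³ B = u`,
which is possible because `12` is a unit of `ℤ_ℓ` and `ℓ^{kp}` is not. As `p` is prime to `6`, any
`A, B` become a square and a cube after multiplication by a common `p`-th power: `a² = λᵖ A`,
`b³ = λᵖ B`. Then `c = ℓᵏ λ` gives `a² + b³ = λᵖ ℓ^{kp} = cᵖ` and `12³ b³ = λᵖ u = j₀ cᵖ`. -/

lemma Nat.Prime.coprime_six_of_three_lt {p : ℕ} (hp : p.Prime) (h : 3 < p) : p.Coprime 6 :=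
  Nat.Coprime.mul_right ((Nat.coprime_primes hp Nat.prime_two).2 (by omega))
    ((Nat.coprime_primes hp Nat.prime_three).2 (by omega))

/-- Take `c = A³ B^{2p}`, `a = Aᵐ B^{p²}`, `b = Aᵖ Bⁿ` with `2m = 3p + 1` and `3n = 2p² + 1`. -/
theorem exists_sq_eq_pow_mul_and_cube_eq_pow_mul {M : Type*} [CommMonoid M] {p : ℕ}
    (hp : p.Coprime 6) (A B : M) :
    ∃ a b c : M, a ^ 2 = c ^ p * A ∧ b ^ 3 = c ^ p * B := by
  have h2 : p % 2 = 1 := Nat.odd_iff.1 <| Nat.Coprime.odd_of_right <|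
    Nat.Coprime.coprime_dvd_right (by norm_num) hp
  have h3 : p % 3 ≠ 0 := fun h => by
    have := Nat.Coprime.coprime_dvd_right (by norm_num : 3 ∣ 6) hp
    rw [Nat.coprime_comm, Nat.Prime.coprime_iff_not_dvd Nat.prime_three] at this
    exact this (Nat.dvd_of_mod_eq_zero h)
  have hsq : p ^ 2 % 3 = 1 := by
    rw [Nat.pow_mod]; rcases (by omega : p % 3 = 1 ∨ p % 3 = 2) with h | h <;> rw [h]
  refine ⟨A ^ ((3 * p + 1) / 2) * B ^ p ^ 2, A ^ p * B ^ ((2 * p ^ 2 + 1) / 3),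
    A ^ 3 * B ^ (2 * p), ?_, ?_⟩
  · simp only [mul_pow, ← pow_mul]
    rw [show (3 * p + 1) / 2 * 2 = 3 * p + 1 by omega, pow_succ, sq, mul_comm (2 * p)]
    ac_rfl
  · simp only [mul_pow, ← pow_mul]
    rw [show (2 * p ^ 2 + 1) / 3 * 3 = 2 * p ^ 2 + 1 by omega, pow_succ, sq, mul_comm 3 p]
    ac_rfl

theorem IsLocalRing.exists_units_add_eq_of_mem_nonunits {R : Type*} [CommRing R]
    [IsLocalRing R] {x : R} (hx : x ∈ nonunits R) (B : Rˣ) : ∃ A : Rˣ, (A : R) + B = x := by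
  have hA : IsUnit (x - B) := (isUnit_or_isUnit_of_isUnit_add (b := -x)
    (by convert B.isUnit.neg using 1; ring)).resolve_right (by rwa [IsUnit.neg_iff])
  exact ⟨hA.unit, by simp⟩

namespace PadicInt

variable {p : ℕ} [Fact p.Prime]

theorem valuation_units (u : ℤ_[p]ˣ) : (u : ℤ_[p]).valuation = 0 := by
  have := valuation_mul u.ne_zero u⁻¹.ne_zero
  rw [← Units.val_mul, mul_inv_cancel, Units.val_one, valuation_one] at this
  omega

theorem isUnit_natCast_iff {n : ℕ} : IsUnit (n : ℤ_[p]) ↔ p.Coprime n := by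
  rw [isUnit_iff, norm_natCast_eq_one_iff]

theorem isUnit_twelve (hp : 3 < p) : IsUnit (12 : ℤ_[p]) := by
  have h6 := Nat.Prime.coprime_six_of_three_lt Fact.out hp
  simpa using isUnit_natCast_iff.2 <| h6.mul_right (h6.coprime_dvd_right (by norm_num : 2 ∣ 6))

theorem pow_mem_nonunits {n : ℕ} (hn : n ≠ 0) : (p : ℤ_[p]) ^ n ∈ nonunits ℤ_[p] :=
  fun h => p_nonunit ((isUnit_pow_iff hn).1 h)

end PadicInt

theorem Padic.exists_units_coe_eq_mul_zpow {p : ℕ} [Fact p.Prime] {x : ℚ_[p]} (hx : x ≠ 0) :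
    ∃ u : ℤ_[p]ˣ, (u : ℚ_[p]) = x * (p : ℚ_[p]) ^ (-x.valuation) := by
  have hp : (p : ℝ) ≠ 0 := by exact_mod_cast (Fact.out : p.Prime).ne_zero
  refine ⟨PadicInt.mkUnits (u := x * (p : ℚ_[p]) ^ (-x.valuation)) ?_, rfl⟩
  rw [norm_mul, norm_eq_zpow_neg_valuation hx, norm_p_zpow, neg_neg, ← zpow_add₀ hp,
    neg_add_cancel, zpow_zero]

theorem exists_ell_primitive_solution_mult_reduction_general (ℓ p : ℕ) [Fact ℓ.Prime] (hp : p.Prime)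
    (hℓ3 : ℓ > 3) (hp3 : p > 3) (k : ℕ) (hk : 0 < k) (j₀ : ℚ_[ℓ])
    (hj : j₀.valuation = -(k * p : ℤ)) :
    ∃ (a b : ℤ_[ℓ]ˣ) (c : ℤ_[ℓ]),
      c.valuation = (k : ℤ) ∧
      (a : ℤ_[ℓ]) ^ 2 + (b : ℤ_[ℓ]) ^ 3 = c ^ p ∧
      (12 ^ 3 * ((b : ℤ_[ℓ]) : ℚ_[ℓ]) ^ 3 : ℚ_[ℓ]) = j₀ * ((c : ℚ_[ℓ])) ^ p := by
  have hkp : k * p ≠ 0 := Nat.mul_ne_zero hk.ne' hp.ne_zero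
  have hj₀ : j₀ ≠ 0 := by rintro rfl; simp at hj; omega
  obtain ⟨u, hu⟩ := Padic.exists_units_coe_eq_mul_zpow hj₀
  rw [hj, neg_neg, ← Nat.cast_mul, zpow_natCast] at hu
  obtain ⟨t, ht⟩ := (PadicInt.isUnit_twelve hℓ3).pow 3
  obtain ⟨A, hA⟩ := IsLocalRing.exists_units_add_eq_of_mem_nonunits
    (PadicInt.pow_mem_nonunits (p := ℓ) hkp) (t⁻¹ * u)
  obtain ⟨a, b, c, ha, hb⟩ :=
    exists_sq_eq_pow_mul_and_cube_eq_pow_mul (hp.coprime_six_of_three_lt hp3) A (t⁻¹ * u)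
  replace ha := congrArg Units.val ha
  replace hb := congrArg Units.val hb
  push_cast at ha hb hA
  have h12b : (12 ^ 3 * b ^ 3 : ℤ_[ℓ]) = c ^ p * u := by
    rw [← ht, hb, mul_left_comm, Units.mul_inv_cancel_left]
  refine ⟨a, b, ℓ ^ k * c, by simp [PadicInt.valuation_units], ?_, ?_⟩
  · linear_combination ha + hb + (c : ℤ_[ℓ]) ^ p * hA
  · have := congrArg ((↑) : ℤ_[ℓ] → ℚ_[ℓ]) h12b
    push_cast [show ((12 : ℤ_[ℓ]) : ℚ_[ℓ]) = 12 from PadicInt.coe_natCast 12] at this ⊢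
    rw [this, hu]
    ring

/-- Let `ℓ > 3` and `p > 3` be distinct primes, `k` a positive integer, and `j₀ ∈ ℚ_ℓ` with
`v_ℓ(j₀) = -k p`. Then there exist units `a, b` of `ℤ_ℓ` and `c ∈ ℤ_ℓ` with `v_ℓ(c) = k`,
`a² + b³ = cᵖ` and `12³ b³ = j₀ cᵖ` in `ℚ_ℓ`. -/
theorem exists_ell_primitive_solution_mult_reduction (ℓ p : ℕ) [Fact ℓ.Prime] (hp : p.Prime)
    (hℓ3 : ℓ > 3) (hp3 : p > 3) (hℓp : ℓ ≠ p) (k : ℕ) (hk : 0 < k) (j₀ : ℚ_[ℓ])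
    (hj : j₀.valuation = -(k * p : ℤ)) :
    ∃ (a b : ℤ_[ℓ]ˣ) (c : ℤ_[ℓ]),
      c.valuation = (k : ℤ) ∧
      (a : ℤ_[ℓ]) ^ 2 + (b : ℤ_[ℓ]) ^ 3 = c ^ p ∧
      (12 ^ 3 * ((b : ℤ_[ℓ]) : ℚ_[ℓ]) ^ 3 : ℚ_[ℓ]) = j₀ * ((c : ℚ_[ℓ])) ^ p :=
  exists_ell_primitive_solution_mult_reduction_general ℓ p hp hℓ3 hp3 k hk j₀ hj
end
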